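/- In dimension d = 1, let m(x) = (α/2)x² for some α > 0, and let β > max{1/2, α} satisfy β = α + β/(1/2 + β). Then there exist Gaussian probability densities G on ℝ such that I₂(T̂[G] | F) / I₂(G | F) > (1/2 + β)^{-2} and H(T̂[G] | F) / H(G | F) > (1/2 + β)^{-2}, where F = γ_{0, 1/β} is the centred Gaussian quasi-equilibrium with variance 1/β. -/

import Mathlib

open MeasureTheory Filter

noncomputable section

/-- The Gaussian probability density on `ℝ` with mean `m` and variance `v`. -/
noncomputable def gauss1 (m v : ℝ) (x : ℝ) : ℝ :=
  (Real.sqrt (2 * Real.pi * v))⁻¹ * Real.exp (-(x - m) ^ 2 / (2 * v))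

/-- Fisher's infinitesimal reproduction operator `R` on `ℝ`. -/
noncomputable def reprod1 (F : ℝ → ℝ) (x : ℝ) : ℝ :=
  (∫ p : ℝ × ℝ, gauss1 0 1 (x - (p.1 + p.2) / 2) * F p.1 * F p.2) / (∫ y, |F y|)

/-- The one-dimensional Fisher infinitesimal model operator `T = S ∘ R`. -/
noncomputable def fisherT1 (m : ℝ → ℝ) (F : ℝ → ℝ) : ℝ → ℝ :=
  fun x => Real.exp (-(m x)) * reprod1 F x

/-- The renormalised Fisher operator `T̂[F] = T[F]/‖T[F]‖_{L¹}`. -/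
noncomputable def fisherHat1 (m : ℝ → ℝ) (F : ℝ → ℝ) : ℝ → ℝ :=
  fun x => fisherT1 m F x / (∫ y, |fisherT1 m F y|)

/-- The relative entropy `H(ν | μ) = ∫ ν log(ν/μ)` of densities on `ℝ`. -/
noncomputable def relEnt1 (ν μ : ℝ → ℝ) : ℝ :=
  ∫ x, ν x * Real.log (ν x / μ x)

/-- The `L²` relative Fisher information `I₂(ν | μ) = ∫ |(log(ν/μ))'|² dν` on `ℝ`. -/
noncomputable def relFisher2 (ν μ : ℝ → ℝ) : ℝ :=
  ∫ x, (deriv (fun y => Real.log (ν y / μ y)) x) ^ 2 * ν x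

/-!
On Gaussians everything is explicit. `T̂` maps `γ_{μ,v}` to `γ_{μ/D, (1+v/2)/D}` with
`D = 1 + α(1 + v/2)`, and relative to `F = γ_{0,w}` both `I₂(γ_{μ,v} | F)` and `H(γ_{μ,v} | F)`
are a function of the variances plus a fixed multiple of `μ²`. So for a fixed variance `v` both
ratios tend to `D⁻²` as `μ → ∞`. At the quasi-stationary variance `v = 1/β` the fixed-point
equation gives `D = 1/2 + β`; any narrower Gaussian has a smaller `D`, so for a large mean both
ratios exceed `(1/2 + β)⁻²`.
-/

open ProbabilityTheory

lemma gauss1_eq_gaussianPDFReal (m v : ℝ) : gauss1 m v = gaussianPDFReal m v.toNNReal := by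
  ext x
  rcases le_or_gt v 0 with hv | hv
  · simp [gauss1, gaussianPDFReal, Real.toNNReal_of_nonpos hv, Real.sqrt_eq_zero_of_nonpos,
      mul_nonpos_of_nonneg_of_nonpos (by positivity : 0 ≤ 2 * Real.pi) hv]
  · simp [gauss1, gaussianPDFReal, Real.coe_toNNReal _ hv.le]

lemma gauss1_pos {v : ℝ} (hv : 0 < v) (m x : ℝ) : 0 < gauss1 m v x := by
  rw [gauss1_eq_gaussianPDFReal]
  exact gaussianPDFReal_pos _ _ _ (by simpa using hv)

lemma integrable_gauss1 (m v : ℝ) : Integrable (gauss1 m v) := by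
  rw [gauss1_eq_gaussianPDFReal]
  exact integrable_gaussianPDFReal _ _

lemma integral_gauss1 {v : ℝ} (hv : 0 < v) (m : ℝ) : ∫ x, gauss1 m v x = 1 := by
  rw [gauss1_eq_gaussianPDFReal]
  exact integral_gaussianPDFReal_eq_one _ (by simpa using hv)

lemma integral_sq_gaussianReal (m : ℝ) (v : NNReal) :
    ∫ x, x ^ 2 ∂gaussianReal m v = v + m ^ 2 := by
  have h := variance_eq_sub (memLp_id_gaussianReal (μ := m) (v := v) 2)
  simp only [variance_id_gaussianReal, Pi.pow_apply, id, integral_id_gaussianReal] at h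
  linarith

lemma integral_quadratic_mul_gauss1 {v : ℝ} (hv : 0 < v) (a b c m : ℝ) :
    ∫ x, (a * x ^ 2 + b * x + c) * gauss1 m v x = a * (v + m ^ 2) + b * m + c := by
  have hL2 := memLp_id_gaussianReal (μ := m) (v := v.toNNReal) 2
  have hsq : Integrable (fun x : ℝ => a * x ^ 2) (gaussianReal m v.toNNReal) :=
    hL2.integrable_sq.const_mul a
  have hid : Integrable (fun x : ℝ => b * x) (gaussianReal m v.toNNReal) :=
    (hL2.integrable (by norm_num)).const_mul b
  have hlin : Integrable (fun x : ℝ => a * x ^ 2 + b * x) (gaussianReal m v.toNNReal) :=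
    hsq.add hid
  calc ∫ x, (a * x ^ 2 + b * x + c) * gauss1 m v x
      = ∫ x, (a * x ^ 2 + b * x + c) ∂gaussianReal m v.toNNReal := by
        rw [integral_gaussianReal_eq_integral_smul (by simpa using hv),
          gauss1_eq_gaussianPDFReal]
        simp only [smul_eq_mul, mul_comm]
    _ = _ := by
        rw [integral_add hlin (integrable_const c), integral_add hsq hid,
          integral_const_mul, integral_const_mul, integral_sq_gaussianReal,
          integral_id_gaussianReal, Real.coe_toNNReal _ hv.le]
        simp

@[fun_prop]
lemma continuous_gauss1 (m v : ℝ) : Continuous (gauss1 m v) := by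
  unfold gauss1
  fun_prop

lemma gauss1_le {v : ℝ} (hv : 0 ≤ v) (m x : ℝ) :
    gauss1 m v x ≤ (Real.sqrt (2 * Real.pi * v))⁻¹ :=
  mul_le_of_le_one_right (by positivity)
    (Real.exp_le_one_iff.2 (div_nonpos_of_nonpos_of_nonneg (by nlinarith) (by positivity)))

lemma gauss1_const_sub (m v c t : ℝ) : gauss1 m v (c - t) = gauss1 (c - m) v t := by
  unfold gauss1
  rw [show c - t - m = -(t - (c - m)) by ring, neg_sq]

lemma gauss1_two_mul (m v x : ℝ) : gauss1 (2 * m) (4 * v) (2 * x) = gauss1 m v x / 2 := by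
  unfold gauss1
  rw [show 2 * Real.pi * (4 * v) = 2 ^ 2 * (2 * Real.pi * v) by ring,
    Real.sqrt_mul (by positivity), Real.sqrt_sq (by norm_num)]
  ring_nf

lemma gauss1_mul_gauss1 {s u : ℝ} (hs : 0 < s) (hu : 0 < u) (a b t : ℝ) :
    gauss1 a s t * gauss1 b u t
      = gauss1 b (s + u) a * gauss1 ((a * u + b * s) / (s + u)) (s * u / (s + u)) t := by
  unfold gauss1
  have hpref : (Real.sqrt (2 * Real.pi * s))⁻¹ * (Real.sqrt (2 * Real.pi * u))⁻¹
      = (Real.sqrt (2 * Real.pi * (s + u)))⁻¹ *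
        (Real.sqrt (2 * Real.pi * (s * u / (s + u))))⁻¹ := by
    rw [← mul_inv, ← mul_inv, ← Real.sqrt_mul (by positivity), ← Real.sqrt_mul (by positivity)]
    field_simp
  have hexp : -(t - a) ^ 2 / (2 * s) + -(t - b) ^ 2 / (2 * u)
      = -(a - b) ^ 2 / (2 * (s + u)) + -(t - (a * u + b * s) / (s + u)) ^ 2
          / (2 * (s * u / (s + u))) := by
    field_simp
    ring
  calc _ = ((Real.sqrt (2 * Real.pi * s))⁻¹ * (Real.sqrt (2 * Real.pi * u))⁻¹) *
        Real.exp (-(t - a) ^ 2 / (2 * s) + -(t - b) ^ 2 / (2 * u)) := by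
        rw [Real.exp_add]; ring
    _ = _ := by
        rw [hpref, hexp, Real.exp_add]; ring

lemma integral_gauss1_mul_gauss1 {s u : ℝ} (hs : 0 < s) (hu : 0 < u) (a b : ℝ) :
    ∫ t, gauss1 a s t * gauss1 b u t = gauss1 b (s + u) a := by
  simp only [gauss1_mul_gauss1 hs hu a b]
  rw [integral_const_mul, integral_gauss1 (by positivity), mul_one]

lemma gauss1_sub_const (m v x c : ℝ) : gauss1 m v (x - c) = gauss1 (m + c) v x := by
  unfold gauss1
  rw [sub_sub, add_comm c]

lemma gauss1_zero_one_sub_add_div_two (x p q : ℝ) :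
    gauss1 0 1 (x - (p + q) / 2) = 2 * gauss1 (2 * x - p) 4 q := by
  have h := gauss1_two_mul 0 1 (x - (p + q) / 2)
  rw [mul_zero, mul_one, show 2 * (x - (p + q) / 2) = 2 * x - p - q by ring, gauss1_const_sub,
    sub_zero] at h
  linarith

lemma integral_abs_gauss1 {v : ℝ} (hv : 0 < v) (m : ℝ) : ∫ x, |gauss1 m v x| = 1 := by
  simp only [abs_of_pos (gauss1_pos hv m _), integral_gauss1 hv]

lemma integrable_reprod1_integrand {v : ℝ} (hv : 0 < v) (μ x : ℝ) :
    Integrable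
      (fun p : ℝ × ℝ => gauss1 0 1 (x - (p.1 + p.2) / 2) * gauss1 μ v p.1 * gauss1 μ v p.2)
      (volume.prod volume) := by
  have hdom : Integrable (fun p : ℝ × ℝ =>
      (Real.sqrt (2 * Real.pi * 1))⁻¹ * (gauss1 μ v p.1 * gauss1 μ v p.2)) (volume.prod volume) :=
    ((integrable_gauss1 μ v).mul_prod (integrable_gauss1 μ v)).const_mul _
  refine hdom.mono' (by fun_prop) (ae_of_all _ fun p => ?_)
  have h0 := gauss1_pos one_pos 0 (x - (p.1 + p.2) / 2)
  have h1 := gauss1_pos hv μ p.1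
  have h2 := gauss1_pos hv μ p.2
  rw [Real.norm_eq_abs, abs_of_pos (by positivity), mul_assoc]
  exact mul_le_mul_of_nonneg_right (gauss1_le zero_le_one 0 _) (by positivity)

lemma reprod1_gauss1 {v : ℝ} (hv : 0 < v) (μ : ℝ) :
    reprod1 (gauss1 μ v) = gauss1 μ (1 + v / 2) := by
  funext x
  rw [reprod1, integral_abs_gauss1 hv, div_one, Measure.volume_eq_prod,
    integral_prod _ (integrable_reprod1_integrand hv μ x)]
  have inner : ∀ p : ℝ, ∫ q, gauss1 0 1 (x - (p + q) / 2) * gauss1 μ v p * gauss1 μ v q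
      = 2 * (gauss1 (2 * x - μ) (4 + v) p * gauss1 μ v p) := by
    intro p
    calc _ = ∫ q, 2 * gauss1 μ v p * (gauss1 (2 * x - p) 4 q * gauss1 μ v q) := by
          congr 1; ext q; rw [gauss1_zero_one_sub_add_div_two]; ring
      _ = _ := by
          rw [integral_const_mul, integral_gauss1_mul_gauss1 (by norm_num) hv, gauss1_const_sub]
          ring
  simp only [inner]
  rw [integral_const_mul, integral_gauss1_mul_gauss1 (by positivity) hv, gauss1_sub_const,
    show 4 + v + v = 4 * (1 + v / 2) by ring, ← two_mul, gauss1_two_mul]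
  ring

lemma exists_exp_mul_gauss1_eq {α w : ℝ} (hw : 0 < w) (hαw : 0 < 1 + α * w) (μ : ℝ) :
    ∃ c > 0, ∀ x, Real.exp (-(α / 2 * x ^ 2)) * gauss1 μ w x
      = c * gauss1 (μ / (1 + α * w)) (w / (1 + α * w)) x := by
  set w' := w / (1 + α * w)
  set μ' := μ / (1 + α * w)
  refine ⟨Real.sqrt (w' / w) * Real.exp (μ' ^ 2 / (2 * w') - μ ^ 2 / (2 * w)),
    by positivity, fun x => ?_⟩
  have hpref : (Real.sqrt (2 * Real.pi * w))⁻¹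
      = Real.sqrt (w' / w) * (Real.sqrt (2 * Real.pi * w'))⁻¹ := by
    rw [← Real.sqrt_inv, ← Real.sqrt_inv, ← Real.sqrt_mul (by positivity)]
    congr 1
    field_simp [w']
  have hexp : -(α / 2 * x ^ 2) + -(x - μ) ^ 2 / (2 * w)
      = (μ' ^ 2 / (2 * w') - μ ^ 2 / (2 * w)) + -(x - μ') ^ 2 / (2 * w') := by
    simp only [w', μ']
    field_simp
    ring
  unfold gauss1
  rw [mul_left_comm, ← Real.exp_add, hpref, hexp, Real.exp_add]
  ring

lemma fisherHat1_eq_of_fisherT1_eq {m F : ℝ → ℝ} {c a v : ℝ} (hc : 0 < c) (hv : 0 < v)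
    (h : ∀ x, fisherT1 m F x = c * gauss1 a v x) : fisherHat1 m F = gauss1 a v := by
  ext x
  simp only [fisherHat1, h, abs_mul, abs_of_pos hc, integral_const_mul, integral_abs_gauss1 hv]
  field_simp

lemma fisherHat1_quadratic_gauss1 {α v : ℝ} (hα : 0 ≤ α) (hv : 0 < v) (μ : ℝ) :
    fisherHat1 (fun x => α / 2 * x ^ 2) (gauss1 μ v)
      = gauss1 (μ / (1 + α * (1 + v / 2))) ((1 + v / 2) / (1 + α * (1 + v / 2))) := by
  obtain ⟨c, hc, hsel⟩ := exists_exp_mul_gauss1_eq (α := α) (w := 1 + v / 2) (by positivity)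
    (by positivity) μ
  refine fisherHat1_eq_of_fisherT1_eq hc (by positivity) fun x => ?_
  rw [fisherT1, reprod1_gauss1 hv, hsel]

lemma log_gauss1 {v : ℝ} (hv : 0 < v) (m y : ℝ) :
    Real.log (gauss1 m v y) = -Real.log (2 * Real.pi * v) / 2 - (y - m) ^ 2 / (2 * v) := by
  rw [gauss1, Real.log_mul (by positivity) (Real.exp_ne_zero _), Real.log_exp, Real.log_inv,
    Real.log_sqrt (by positivity)]
  ring

lemma log_gauss1_div_gauss1 {v w : ℝ} (hv : 0 < v) (hw : 0 < w) (m y : ℝ) :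
    Real.log (gauss1 m v y / gauss1 0 w y)
      = (1 / (2 * w) - 1 / (2 * v)) * y ^ 2 + m / v * y
        + (Real.log (w / v) / 2 - m ^ 2 / (2 * v)) := by
  rw [Real.log_div (gauss1_pos hv m y).ne' (gauss1_pos hw 0 y).ne', log_gauss1 hv,
    log_gauss1 hw, Real.log_div hw.ne' hv.ne', Real.log_mul (by positivity) hv.ne',
    Real.log_mul (by positivity) hw.ne']
  field_simp
  ring

lemma relEnt1_gauss1 {v w : ℝ} (hv : 0 < v) (hw : 0 < w) (m : ℝ) :
    relEnt1 (gauss1 m v) (gauss1 0 w)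
      = (Real.log (w / v) + v / w - 1) / 2 + m ^ 2 / (2 * w) := by
  simp only [relEnt1, log_gauss1_div_gauss1 hv hw, mul_comm (gauss1 m v _),
    integral_quadratic_mul_gauss1 hv]
  field_simp
  ring

lemma relFisher2_gauss1 {v w : ℝ} (hv : 0 < v) (hw : 0 < w) (m : ℝ) :
    relFisher2 (gauss1 m v) (gauss1 0 w) = (1 / w - 1 / v) ^ 2 * v + m ^ 2 / w ^ 2 := by
  have hderiv : ∀ x, deriv (fun y => Real.log (gauss1 m v y / gauss1 0 w y)) x
      = (1 / w - 1 / v) * x + m / v := by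
    intro x
    simp only [log_gauss1_div_gauss1 hv hw]
    have := (((hasDerivAt_pow 2 x).const_mul (1 / (2 * w) - 1 / (2 * v))).fun_add
      ((hasDerivAt_id' x).const_mul (m / v))).add_const (Real.log (w / v) / 2 - m ^ 2 / (2 * v))
    rw [this.deriv]
    field_simp
    ring
  have hsq : ∀ x, ((1 / w - 1 / v) * x + m / v) ^ 2
      = (1 / w - 1 / v) ^ 2 * x ^ 2 + 2 * (1 / w - 1 / v) * (m / v) * x + (m / v) ^ 2 := by
    intro x; ring
  simp only [relFisher2, hderiv, hsq, integral_quadratic_mul_gauss1 hv]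
  field_simp
  ring

lemma eventually_lt_div_add_sq_div {r D k : ℝ} (hr : r < (D ^ 2)⁻¹) (hk : 0 < k) (C C' : ℝ) :
    ∀ᶠ m in atTop, r < (C' + (m / D) ^ 2 / k) / (C + m ^ 2 / k) := by
  have ht : Tendsto (fun m : ℝ => m ^ 2 / k) atTop atTop :=
    (tendsto_pow_atTop two_ne_zero).atTop_div_const hk
  filter_upwards [ht.eventually_gt_atTop (-C),
    ht.eventually_gt_atTop ((r * C - C') / ((D ^ 2)⁻¹ - r))] with m hpos hbig
  rw [div_lt_iff₀ (sub_pos.2 hr)] at hbig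
  have hnum : (m / D) ^ 2 / k = (D ^ 2)⁻¹ * (m ^ 2 / k) := by ring
  rw [lt_div_iff₀ (by linarith), hnum]
  linarith

/-- Equality holds at `v = 1 / β`, the variance of the quasi-stationary Gaussian. -/
lemma one_add_mul_one_add_half_lt {α β v : ℝ} (hα : 0 < α) (hβ : 0 < β)
    (hβeq : β = α + β / (1 / 2 + β)) (hv : v < 1 / β) :
    1 + α * (1 + v / 2) < 1 / 2 + β := by
  have heq : 1 + α * (1 + 1 / β / 2) = 1 / 2 + β := by
    field_simp at hβeq ⊢
    linarith
  nlinarith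

/-- For quadratic selection `m(x) = (α/2)x²` in dimension 1, neither
the `L²` relative Fisher information nor the relative entropy contracts under the
renormalised Fisher operator `T̂` at the rate `(1/2 + β)^{-2}`: there are Gaussian
densities `G` for which both ratios exceed `(1/2 + β)^{-2}` (here `F = γ_{0,1/β}` is the
Gaussian quasi-equilibrium). -/
theorem fisher_no_contraction_other_metrics (α β : ℝ) (hα : 0 < α)
    (hβ : max (1 / 2) α < β) (hβeq : β = α + β / (1 / 2 + β)) :
    ∃ μ₀ σ : ℝ, 0 < σ ∧
      ((1 / 2 + β)⁻¹) ^ 2 <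
        relFisher2 (fisherHat1 (fun x => α / 2 * x ^ 2) (gauss1 μ₀ (σ ^ 2)))
            (gauss1 0 (1 / β)) /
          relFisher2 (gauss1 μ₀ (σ ^ 2)) (gauss1 0 (1 / β)) ∧
      ((1 / 2 + β)⁻¹) ^ 2 <
        relEnt1 (fisherHat1 (fun x => α / 2 * x ^ 2) (gauss1 μ₀ (σ ^ 2)))
            (gauss1 0 (1 / β)) /
          relEnt1 (gauss1 μ₀ (σ ^ 2)) (gauss1 0 (1 / β)) := by
  have hβ0 : 0 < β := (lt_max_iff.2 (Or.inr hα)).trans hβ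
  set v := 1 / (2 * β)
  have hv : 0 < v := by positivity
  set D := 1 + α * (1 + v / 2)
  have hrate : ((1 / 2 + β)⁻¹) ^ 2 < (D ^ 2)⁻¹ := by
    rw [inv_pow]
    gcongr
    exact one_add_mul_one_add_half_lt hα hβ0 hβeq (by simp only [v]; gcongr; linarith)
  have hw : (0 : ℝ) < 1 / β := by positivity
  have hv' : 0 < (1 + v / 2) / D := by positivity
  obtain ⟨μ₀, hI, hH⟩ :=
    ((eventually_lt_div_add_sq_div hrate (k := (1 / β) ^ 2) (by positivity) _ _).and
      (eventually_lt_div_add_sq_div hrate (k := 2 * (1 / β)) (by positivity) _ _)).exists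
  refine ⟨μ₀, Real.sqrt v, Real.sqrt_pos.2 hv, ?_⟩
  rw [Real.sq_sqrt hv.le, fisherHat1_quadratic_gauss1 hα.le hv, relFisher2_gauss1 hv' hw,
    relFisher2_gauss1 hv hw, relEnt1_gauss1 hv' hw, relEnt1_gauss1 hv hw]
  exact ⟨hI, hH⟩
end
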